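/- For a Young diagram λ of size m, Σ_{|λ| = m} (f^λ)² = m!, where f^λ is the number of standard Young tableaux of shape λ. -/

import Mathlib

open Finset

/-!
Young's lattice is a 1-differential poset: every diagram has exactly one more upper cover than
lower covers (the addable rows are row `0` and the rows just below the removable corners), and
two distinct diagrams of the same size have as many common upper covers as common lower covers
(both counts are `0` or `1`, namely `μ ⊔ ρ` resp. `μ ⊓ ρ`, and `#(μ ⊔ ρ) + #(μ ⊓ ρ) = #μ + #ρ`).
For the operators `U`, `D` sending a diagram to the sum of its upper resp. lower covers, this says
`DU = UD + I`. Applied to the path count `f`, which satisfies `f = D f`, induction on the rank gives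
`∑_{ν ⋗ μ} f ν = (|μ| + 1) f μ`, and hence `∑_{|ν| = m + 1} f ν ^ 2 = (m + 1) ∑_{|ρ| = m} f ρ ^ 2`.
-/

/-- Stanley's 1-differential posets, presented by a rank function and the finsets of upper and
lower covers of each element. -/
structure IsDifferentialPoset {α : Type*} [DecidableEq α] (rank : α → ℕ) (up down : α → Finset α) :
    Prop where
  mem_up_iff_mem_down : ∀ {μ ν}, ν ∈ up μ ↔ μ ∈ down ν
  rank_of_mem_up : ∀ {μ ν}, ν ∈ up μ → rank ν = rank μ + 1
  card_up : ∀ μ, #(up μ) = #(down μ) + 1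
  card_up_inter_up : ∀ {μ ρ}, μ ≠ ρ → rank μ = rank ρ → #(up μ ∩ up ρ) = #(down μ ∩ down ρ)

namespace IsDifferentialPoset

variable {α β : Type*} [DecidableEq α] [AddCommMonoid β] {rank : α → ℕ} {up down : α → Finset α}
  (hP : IsDifferentialPoset rank up down) {level : ℕ → Finset α}
  (hlevel : ∀ n a, a ∈ level n ↔ rank a = n)
include hP hlevel

theorem sum_up_sum_down (g : α → β) (μ : α) :
    ∑ ν ∈ up μ, ∑ ρ ∈ down ν, g ρ = ∑ ρ ∈ level (rank μ), #(up μ ∩ up ρ) • g ρ := by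
  rw [sum_comm' (t' := level (rank μ)) (s' := fun ρ => up μ ∩ up ρ)]
  · simp only [sum_const]
  · intro ν ρ
    rw [mem_inter, hlevel, ← hP.mem_up_iff_mem_down]
    constructor
    · rintro ⟨hμν, hρν⟩
      have := hP.rank_of_mem_up hμν
      have := hP.rank_of_mem_up hρν
      exact ⟨⟨hμν, hρν⟩, by omega⟩
    · rintro ⟨⟨hμν, hρν⟩, -⟩
      exact ⟨hμν, hρν⟩

theorem sum_down_sum_up (g : α → β) (μ : α) :
    ∑ σ ∈ down μ, ∑ ρ ∈ up σ, g ρ = ∑ ρ ∈ level (rank μ), #(down μ ∩ down ρ) • g ρ := by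
  rw [sum_comm' (t' := level (rank μ)) (s' := fun ρ => down μ ∩ down ρ)]
  · simp only [sum_const]
  · intro σ ρ
    rw [mem_inter, hlevel, ← hP.mem_up_iff_mem_down, ← hP.mem_up_iff_mem_down]
    constructor
    · rintro ⟨hσμ, hσρ⟩
      have := hP.rank_of_mem_up hσμ
      have := hP.rank_of_mem_up hσρ
      exact ⟨⟨hσμ, hσρ⟩, by omega⟩
    · rintro ⟨⟨hσμ, hσρ⟩, -⟩
      exact ⟨hσμ, hσρ⟩

/-- The commutation relation `DU = UD + I`. -/
theorem sum_up_sum_down_eq (g : α → β) (μ : α) :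
    ∑ ν ∈ up μ, ∑ ρ ∈ down ν, g ρ = ∑ σ ∈ down μ, ∑ ρ ∈ up σ, g ρ + g μ := by
  rw [hP.sum_up_sum_down hlevel, hP.sum_down_sum_up hlevel,
    ← sum_ite_eq_of_mem (level (rank μ)) μ g ((hlevel _ _).mpr rfl), ← sum_add_distrib]
  refine sum_congr rfl fun ρ hρ => ?_
  by_cases hμρ : μ = ρ
  · subst hμρ
    rw [inter_self, inter_self, hP.card_up, add_smul, one_smul, if_pos rfl]
  · rw [hP.card_up_inter_up hμρ ((hlevel _ _).mp hρ).symm, if_neg hμρ, add_zero]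

variable {f : α → ℕ} (hf : ∀ ν, rank ν ≠ 0 → f ν = ∑ μ ∈ down ν, f μ)
include hf

theorem sum_up_eq (μ : α) : ∑ ν ∈ up μ, f ν = (rank μ + 1) * f μ := by
  induction hn : rank μ using Nat.strong_induction_on generalizing μ with
  | _ n ih =>
  have hdown : ∀ σ ∈ down μ, rank σ + 1 = n := fun σ hσ =>
    hn ▸ (hP.rank_of_mem_up (hP.mem_up_iff_mem_down.mpr hσ)).symm
  calc ∑ ν ∈ up μ, f ν = ∑ ν ∈ up μ, ∑ ρ ∈ down ν, f ρ :=
        sum_congr rfl fun ν hν => hf ν (by rw [hP.rank_of_mem_up hν]; omega)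
    _ = ∑ σ ∈ down μ, ∑ ρ ∈ up σ, f ρ + f μ := hP.sum_up_sum_down_eq hlevel f μ
    _ = ∑ σ ∈ down μ, n * f σ + f μ := by
        congr 1
        refine sum_congr rfl fun σ hσ => ?_
        rw [ih (rank σ) (by have := hdown σ hσ; omega) σ rfl, hdown σ hσ]
    _ = (n + 1) * f μ := by
        rw [← mul_sum]
        rcases Nat.eq_zero_or_pos n with h0 | hpos
        · rw [h0]; ring
        · rw [← hf μ (by omega)]; ring

theorem sum_sq_level_succ (m : ℕ) :
    ∑ ν ∈ level (m + 1), f ν ^ 2 = (m + 1) * ∑ ρ ∈ level m, f ρ ^ 2 := by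
  calc ∑ ν ∈ level (m + 1), f ν ^ 2 = ∑ ν ∈ level (m + 1), ∑ ρ ∈ down ν, f ν * f ρ := by
        refine sum_congr rfl fun ν hν => ?_
        rw [sq, ← mul_sum, ← hf ν (by rw [(hlevel _ _).mp hν]; omega)]
    _ = ∑ ρ ∈ level m, ∑ ν ∈ up ρ, f ν * f ρ := by
        refine sum_comm' fun ν ρ => ?_
        rw [hlevel, hlevel, ← hP.mem_up_iff_mem_down]
        constructor
        · rintro ⟨hν, hρν⟩
          exact ⟨hρν, by have := hP.rank_of_mem_up hρν; omega⟩
        · rintro ⟨hρν, hρ⟩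
          exact ⟨by rw [hP.rank_of_mem_up hρν, hρ], hρν⟩
    _ = ∑ ρ ∈ level m, (m + 1) * f ρ ^ 2 := by
        refine sum_congr rfl fun ρ hρ => ?_
        rw [← sum_mul, hP.sum_up_eq hlevel hf, (hlevel _ _).mp hρ]
        ring
    _ = (m + 1) * ∑ ρ ∈ level m, f ρ ^ 2 := (mul_sum ..).symm

end IsDifferentialPoset

namespace YoungDiagram

instance : DecidableEq YoungDiagram := fun _ _ => decidable_of_iff _ YoungDiagram.ext_iff.symm

theorem card_strictMono : StrictMono YoungDiagram.card := fun _ _ h =>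
  Finset.card_lt_card (cells_ssubset_iff.mpr h)

theorem eq_of_le_of_card_le {μ ν : YoungDiagram} (h : μ ≤ ν) (hc : ν.card ≤ μ.card) : μ = ν :=
  h.eq_of_not_lt fun hlt => (card_strictMono hlt).not_ge hc

theorem card_eq_zero_iff {μ : YoungDiagram} : μ.card = 0 ↔ μ = ⊥ := by
  rw [YoungDiagram.card, Finset.card_eq_zero, YoungDiagram.ext_iff, cells_bot]

theorem card_sup_add_card_inf (μ ρ : YoungDiagram) :
    (μ ⊔ ρ).card + (μ ⊓ ρ).card = μ.card + ρ.card := by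
  simp only [YoungDiagram.card, cells_sup, cells_inf, card_union_add_card_inter]

theorem lt_sup_of_ne {μ ρ : YoungDiagram} (hne : μ ≠ ρ) (hcard : μ.card = ρ.card) : μ < μ ⊔ ρ :=
  left_lt_sup.mpr fun hle => hne (eq_of_le_of_card_le hle hcard.le).symm

theorem inf_lt_of_ne {μ ρ : YoungDiagram} (hne : μ ≠ ρ) (hcard : μ.card = ρ.card) : μ ⊓ ρ < μ :=
  inf_lt_left.mpr fun hle => hne (eq_of_le_of_card_le hle hcard.ge)

theorem rowLen_notMem (μ : YoungDiagram) (i : ℕ) : (i, μ.rowLen i) ∉ μ := by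
  rw [mem_iff_lt_rowLen]; exact lt_irrefl _

def Addable (μ : YoungDiagram) (i : ℕ) : Prop := i = 0 ∨ μ.rowLen i < μ.rowLen (i - 1)

def Removable (μ : YoungDiagram) (i : ℕ) : Prop := μ.rowLen (i + 1) < μ.rowLen i

instance (μ : YoungDiagram) (i : ℕ) : Decidable (μ.Addable i) :=
  inferInstanceAs (Decidable (_ ∨ _))

instance (μ : YoungDiagram) (i : ℕ) : Decidable (μ.Removable i) :=
  inferInstanceAs (Decidable (_ < _))

variable {μ : YoungDiagram} {i : ℕ}

theorem addable_succ_iff : μ.Addable (i + 1) ↔ μ.Removable i := by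
  simp [Addable, Removable]

theorem Removable.rowLen_pos (h : μ.Removable i) : 0 < μ.rowLen i :=
  Nat.zero_lt_of_lt h

theorem Addable.isLowerSet_insert (h : μ.Addable i) :
    IsLowerSet (↑(insert (i, μ.rowLen i) μ.cells) : Set (ℕ × ℕ)) := by
  rintro ⟨a, b⟩ ⟨a', b'⟩ hle hmem
  obtain ⟨ha, hb⟩ := Prod.mk_le_mk.mp hle
  simp only [coe_insert, Set.mem_insert_iff, mem_coe, mem_cells, Prod.mk.injEq] at hmem ⊢
  rcases hmem with ⟨rfl, rfl⟩ | hmem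
  · rw [mem_iff_lt_rowLen]
    rcases ha.lt_or_eq with ha | rfl
    · have := μ.rowLen_anti a' (a - 1) (by omega)
      rcases h with h | h <;> omega
    · omega
  · exact Or.inr (μ.up_left_mem ha hb hmem)

theorem exists_addable_of_isLowerSet_insert {c : ℕ × ℕ} (hc : c ∉ μ)
    (h : IsLowerSet (↑(insert c μ.cells) : Set (ℕ × ℕ))) :
    ∃ i, μ.Addable i ∧ c = (i, μ.rowLen i) := by
  obtain ⟨i, j⟩ := c
  have below : ∀ d ≤ (i, j), d = (i, j) ∨ d ∈ μ := fun d hd => by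
    simpa using h hd (mem_insert_self _ _)
  rw [mem_iff_lt_rowLen, not_lt] at hc
  have hj : j = μ.rowLen i := by
    rcases below (i, μ.rowLen i) (Prod.mk_le_mk.mpr ⟨le_rfl, hc⟩) with h | h
    · exact (Prod.ext_iff.mp h).2.symm
    · exact absurd h (μ.rowLen_notMem i)
  subst hj
  refine ⟨i, ?_, rfl⟩
  rcases Nat.eq_zero_or_pos i with h0 | hpos
  · exact Or.inl h0
  · rcases below (i - 1, μ.rowLen i) (Prod.mk_le_mk.mpr ⟨Nat.sub_le i 1, le_rfl⟩) with h | h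
    · have := (Prod.ext_iff.mp h).1; omega
    · exact Or.inr (mem_iff_lt_rowLen.mp h)

theorem Removable.isLowerSet_erase (h : μ.Removable i) :
    IsLowerSet (↑(μ.cells.erase (i, μ.rowLen i - 1)) : Set (ℕ × ℕ)) := by
  rintro ⟨a, b⟩ ⟨a', b'⟩ hle hmem
  obtain ⟨ha, hb⟩ := Prod.mk_le_mk.mp hle
  simp only [coe_erase, Set.mem_sdiff, mem_coe, mem_cells, Set.mem_singleton_iff,
    Prod.mk.injEq] at hmem ⊢
  refine ⟨μ.up_left_mem ha hb hmem.1, ?_⟩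
  rintro ⟨rfl, rfl⟩
  have hab := mem_iff_lt_rowLen.mp hmem.1
  rcases ha.lt_or_eq with ha | rfl
  · have := μ.rowLen_anti (a' + 1) a ha
    unfold Removable at h
    omega
  · exact hmem.2 ⟨rfl, by omega⟩

theorem exists_removable_of_isLowerSet_erase {c : ℕ × ℕ} (hc : c ∈ μ)
    (h : IsLowerSet (↑(μ.cells.erase c) : Set (ℕ × ℕ))) :
    ∃ i, μ.Removable i ∧ c = (i, μ.rowLen i - 1) := by
  obtain ⟨i, j⟩ := c
  have above : ∀ d ∈ μ, (i, j) ≤ d → d = (i, j) := fun d hd hle => by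
    by_contra hne
    have := h hle (by simpa using And.intro hd hne)
    simp at this
  have hij := mem_iff_lt_rowLen.mp hc
  have hj : j = μ.rowLen i - 1 := by
    by_contra hne
    have := above (i, j + 1) (mem_iff_lt_rowLen.mpr (by omega))
      (Prod.mk_le_mk.mpr ⟨le_rfl, by omega⟩)
    simp at this
  refine ⟨i, ?_, by rw [hj]⟩
  by_contra hnot
  have hmem : (i + 1, j) ∈ μ := by
    rw [mem_iff_lt_rowLen]; unfold Removable at hnot; omega
  have := above (i + 1, j) hmem (Prod.mk_le_mk.mpr ⟨by omega, le_rfl⟩)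
  simp at this

def addCell (μ : YoungDiagram) (i : ℕ) : YoungDiagram :=
  if h : μ.Addable i then ⟨_, h.isLowerSet_insert⟩ else μ

def removeCell (μ : YoungDiagram) (i : ℕ) : YoungDiagram :=
  if h : μ.Removable i then ⟨_, h.isLowerSet_erase⟩ else μ

theorem cells_addCell (h : μ.Addable i) :
    (μ.addCell i).cells = insert (i, μ.rowLen i) μ.cells := by
  rw [addCell, dif_pos h]

theorem cells_removeCell (h : μ.Removable i) :
    (μ.removeCell i).cells = μ.cells.erase (i, μ.rowLen i - 1) := by
  rw [removeCell, dif_pos h]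

theorem Removable.mem (h : μ.Removable i) : (i, μ.rowLen i - 1) ∈ μ :=
  mem_iff_lt_rowLen.mpr (Nat.sub_lt h.rowLen_pos one_pos)

def removableRows (μ : YoungDiagram) : Finset ℕ := (range (μ.colLen 0)).filter μ.Removable

def addableRows (μ : YoungDiagram) : Finset ℕ := insert 0 ((removableRows μ).image (· + 1))

theorem mem_removableRows : i ∈ removableRows μ ↔ μ.Removable i := by
  rw [removableRows, mem_filter, mem_range, and_iff_right_iff_imp, ← mem_iff_lt_colLen,
    mem_iff_lt_rowLen]
  exact Removable.rowLen_pos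

theorem mem_addableRows : i ∈ addableRows μ ↔ μ.Addable i := by
  cases i with
  | zero => simp [addableRows, Addable]
  | succ i => simp [addableRows, addable_succ_iff, mem_removableRows]

theorem card_addableRows (μ : YoungDiagram) :
    #(addableRows μ) = #(removableRows μ) + 1 := by
  rw [addableRows, card_insert_of_notMem (by simp),
    card_image_of_injective _ (add_left_injective 1)]

def upCovers (μ : YoungDiagram) : Finset YoungDiagram := (addableRows μ).image μ.addCell

def downCovers (μ : YoungDiagram) : Finset YoungDiagram := (removableRows μ).image μ.removeCell

theorem mem_upCovers {ν : YoungDiagram} : ν ∈ upCovers μ ↔ μ ≤ ν ∧ ν.card = μ.card + 1 := by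
  simp only [upCovers, mem_image, mem_addableRows]
  constructor
  · rintro ⟨i, hi, rfl⟩
    rw [← cells_subset_iff, YoungDiagram.card, YoungDiagram.card, cells_addCell hi]
    exact ⟨subset_insert _ _, card_insert_of_notMem (by simpa using μ.rowLen_notMem i)⟩
  · rintro ⟨hle, hcard⟩
    obtain ⟨c, hc, hν⟩ := exists_eq_insert_iff.mpr ⟨cells_subset_iff.mpr hle, hcard.symm⟩
    have hlower := ν.isLowerSet
    rw [← hν] at hlower
    obtain ⟨i, hi, rfl⟩ := exists_addable_of_isLowerSet_insert (by simpa using hc) hlower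
    exact ⟨i, hi, YoungDiagram.ext (by rw [cells_addCell hi, hν])⟩

theorem mem_downCovers {ρ : YoungDiagram} : ρ ∈ downCovers μ ↔ ρ ≤ μ ∧ μ.card = ρ.card + 1 := by
  simp only [downCovers, mem_image, mem_removableRows]
  constructor
  · rintro ⟨i, hi, rfl⟩
    rw [← cells_subset_iff, YoungDiagram.card, YoungDiagram.card, cells_removeCell hi]
    exact ⟨erase_subset _ _, (card_erase_add_one ((mem_cells _).mpr hi.mem)).symm⟩
  · rintro ⟨hle, hcard⟩
    obtain ⟨c, hc, hμ⟩ := exists_eq_insert_iff.mpr ⟨cells_subset_iff.mpr hle, hcard.symm⟩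
    have hρ : ρ.cells = μ.cells.erase c := by rw [← hμ, erase_insert hc]
    have hlower := ρ.isLowerSet
    rw [hρ] at hlower
    obtain ⟨i, hi, rfl⟩ :=
      exists_removable_of_isLowerSet_erase (by simp [← mem_cells, ← hμ]) hlower
    exact ⟨i, hi, YoungDiagram.ext (by rw [cells_removeCell hi, hρ])⟩

theorem card_upCovers (μ : YoungDiagram) : #(upCovers μ) = #(addableRows μ) := by
  refine card_image_of_injOn fun i hi j hj hij => ?_
  rw [mem_coe, mem_addableRows] at hi hj
  have hmem : (i, μ.rowLen i) ∈ (μ.addCell i).cells := by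
    rw [cells_addCell hi]; exact mem_insert_self _ _
  rw [hij, cells_addCell hj, mem_insert, mem_cells] at hmem
  rcases hmem with heq | hmem
  · exact (Prod.ext_iff.mp heq).1
  · exact absurd hmem (μ.rowLen_notMem i)

theorem card_downCovers (μ : YoungDiagram) : #(downCovers μ) = #(removableRows μ) := by
  refine card_image_of_injOn fun i hi j hj hij => ?_
  rw [mem_coe, mem_removableRows] at hi hj
  by_contra hne
  have hmem : (i, μ.rowLen i - 1) ∈ (μ.removeCell j).cells := by
    rw [cells_removeCell hj, mem_erase, mem_cells]
    exact ⟨fun heq => hne (Prod.ext_iff.mp heq).1, hi.mem⟩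
  rw [← hij, cells_removeCell hi] at hmem
  exact notMem_erase _ _ hmem

theorem card_upCovers_eq (μ : YoungDiagram) : #(upCovers μ) = #(downCovers μ) + 1 := by
  rw [card_upCovers, card_downCovers, card_addableRows]

theorem mem_upCovers_inter {μ ρ ν : YoungDiagram} (hne : μ ≠ ρ) (hcard : μ.card = ρ.card) :
    ν ∈ upCovers μ ∩ upCovers ρ ↔ ν = μ ⊔ ρ ∧ (μ ⊔ ρ).card = μ.card + 1 := by
  rw [mem_inter, mem_upCovers, mem_upCovers]
  have hlt := card_strictMono (lt_sup_of_ne hne hcard)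
  constructor
  · rintro ⟨⟨hμ, hν⟩, hρ, -⟩
    have hsup := sup_le hμ hρ
    have := card_strictMono.monotone hsup
    rw [← eq_of_le_of_card_le hsup (by omega)]
    exact ⟨rfl, by omega⟩
  · rintro ⟨rfl, hsup⟩
    exact ⟨⟨le_sup_left, hsup⟩, le_sup_right, by omega⟩

theorem mem_downCovers_inter {μ ρ σ : YoungDiagram} (hne : μ ≠ ρ) (hcard : μ.card = ρ.card) :
    σ ∈ downCovers μ ∩ downCovers ρ ↔ σ = μ ⊓ ρ ∧ (μ ⊓ ρ).card + 1 = μ.card := by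
  rw [mem_inter, mem_downCovers, mem_downCovers]
  have hlt := card_strictMono (inf_lt_of_ne hne hcard)
  constructor
  · rintro ⟨⟨hμ, hσ⟩, hρ, -⟩
    have hinf := le_inf hμ hρ
    have := card_strictMono.monotone hinf
    rw [eq_of_le_of_card_le hinf (by omega)]
    exact ⟨rfl, by omega⟩
  · rintro ⟨rfl, hinf⟩
    exact ⟨⟨inf_le_left, hinf.symm⟩, inf_le_right, by omega⟩

theorem card_upCovers_inter {μ ρ : YoungDiagram} (hne : μ ≠ ρ) (hcard : μ.card = ρ.card) :
    #(upCovers μ ∩ upCovers ρ) = #(downCovers μ ∩ downCovers ρ) := by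
  have hmod := card_sup_add_card_inf μ ρ
  by_cases hsup : (μ ⊔ ρ).card = μ.card + 1
  · have hup : upCovers μ ∩ upCovers ρ = {μ ⊔ ρ} := by
      ext ν
      rw [mem_upCovers_inter hne hcard, mem_singleton, and_iff_left hsup]
    have hdown : downCovers μ ∩ downCovers ρ = {μ ⊓ ρ} := by
      ext σ
      rw [mem_downCovers_inter hne hcard, mem_singleton, and_iff_left (by omega)]
    rw [hup, hdown, card_singleton, card_singleton]
  · have hup : upCovers μ ∩ upCovers ρ = ∅ := eq_empty_of_forall_notMem fun ν hν =>
      hsup ((mem_upCovers_inter hne hcard).mp hν).2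
    have hdown : downCovers μ ∩ downCovers ρ = ∅ := eq_empty_of_forall_notMem fun σ hσ =>
      hsup (by have := ((mem_downCovers_inter hne hcard).mp hσ).2; omega)
    rw [hup, hdown]

theorem isDifferentialPoset : IsDifferentialPoset YoungDiagram.card upCovers downCovers where
  mem_up_iff_mem_down := by
    intro μ ν
    rw [mem_upCovers, mem_downCovers]
  rank_of_mem_up h := (mem_upCovers.mp h).2
  card_up := card_upCovers_eq
  card_up_inter_up := card_upCovers_inter

end YoungDiagram

/-- The RSK identity: `Σ_{|λ| = m} (f λ)² = m!`, where `f λ` is the number of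
standard Young tableaux of shape `λ` (the path count in the Young graph). -/
theorem stmt14
    (below : YoungDiagram → Finset YoungDiagram)
    (hbelow : ∀ ν μ, μ ∈ below ν ↔ μ ≤ ν ∧ ν.card = μ.card + 1)
    (f : YoungDiagram → ℕ)
    (hf0 : f ⊥ = 1)
    (hf : ∀ ν, ν ≠ ⊥ → f ν = ∑ μ ∈ below ν, f μ)
    (level : ℕ → Finset YoungDiagram)
    (hlevel : ∀ m lam, lam ∈ level m ↔ lam.card = m) :
    ∀ m, (∑ lam ∈ level m, (f lam) ^ 2) = Nat.factorial m := by
  obtain rfl : below = YoungDiagram.downCovers := funext fun ν => by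
    ext μ
    rw [hbelow, YoungDiagram.mem_downCovers]
  have hf_pos : ∀ ν : YoungDiagram, ν.card ≠ 0 → f ν = ∑ μ ∈ ν.downCovers, f μ := fun ν hν =>
    hf ν (mt YoungDiagram.card_eq_zero_iff.mpr hν)
  intro m
  induction m with
  | zero =>
    have hlevel0 : level 0 = {⊥} := by
      ext μ
      rw [hlevel, mem_singleton, YoungDiagram.card_eq_zero_iff]
    rw [hlevel0, sum_singleton, hf0, one_pow, Nat.factorial_zero]
  | succ m ih =>
    rw [YoungDiagram.isDifferentialPoset.sum_sq_level_succ hlevel hf_pos, ih, Nat.factorial_succ]
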